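/- Let k be a number field of degree n = [k:ℚ], let I be a nonzero fractional ideal of k, and let x = (x_v)_v be real weights indexed by the infinite places of k satisfying ∏_v e^{x_v} = N(I). Then for every nonzero f ∈ I one has Q_x(f) ≥ n. Moreover, for I = 𝒪_k, x ≡ 0 and f = 1 equality holds: Q_0(1) = n. -/

import Mathlib

/-! Write `m_v ∈ {1, 2}` for the local degrees, so that `∑_v m_v = n` and
`Q_x(f) = ∑_v m_v t_v` with `t_v = (|f|_v e^{-x_v / m_v})²`. By the product formula
`∏_v t_v^{m_v} = (|N(f)| / N(I))²`, and `N(I) ≤ |N(f)|` because `(f) ⊆ I` makes `I` divide `(f)`.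
Weighted AM-GM with weights `m_v` then gives `Q_x(f) ≥ n (∏_v t_v^{m_v})^{1/n} ≥ n`. -/

open NumberField Finset
open scoped Classical

variable (k : Type*) [Field k] [NumberField k]

/-- `Q_x(f) = ∑_{v real} |f|_v² e^{-2 x_v} + 2 ∑_{v complex} |f|_v² e^{-x_v}`. -/
noncomputable def arakelovQ (x : InfinitePlace k → ℝ) (f : k) : ℝ :=
  ∑ v : InfinitePlace k,
    if v.IsReal then (v f) ^ 2 * Real.exp (-2 * x v)
    else 2 * (v f) ^ 2 * Real.exp (-(x v))

theorem Real.sum_le_sum_mul_of_one_le_prod_rpow {ι : Type*} (s : Finset ι) {w z : ι → ℝ}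
    (hw : ∀ i ∈ s, 0 ≤ w i) (hw' : 0 < ∑ i ∈ s, w i) (hz : ∀ i ∈ s, 0 ≤ z i)
    (hprod : 1 ≤ ∏ i ∈ s, z i ^ w i) : ∑ i ∈ s, w i ≤ ∑ i ∈ s, w i * z i := by
  have amgm := Real.geom_mean_le_arith_mean s w z hw hw' hz
  rw [le_div_iff₀ hw'] at amgm
  calc ∑ i ∈ s, w i = 1 * ∑ i ∈ s, w i := (one_mul _).symm
    _ ≤ (∏ i ∈ s, z i ^ w i) ^ (∑ i ∈ s, w i)⁻¹ * ∑ i ∈ s, w i := by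
      gcongr
      exact Real.one_le_rpow hprod (inv_nonneg.mpr hw'.le)
    _ ≤ ∑ i ∈ s, w i * z i := amgm

namespace FractionalIdeal

open scoped nonZeroDivisors

variable {R K : Type*} [CommRing R] [IsDedekindDomain R] [Module.Free ℤ R] [Module.Finite ℤ R]
  [Field K] [Algebra R K] [IsFractionRing R K]

theorem absNorm_le_absNorm_of_le {I J : FractionalIdeal R⁰ K} (hJ : J ≠ 0) (hJI : J ≤ I) :
    absNorm I ≤ absNorm J := by
  have hI : I ≠ 0 := ne_bot_of_le_ne_bot hJ hJI
  obtain ⟨J₀, hJ₀⟩ := le_one_iff_exists_coeIdeal.mp <|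
    show I⁻¹ * J ≤ 1 from (mul_le_mul_right hJI _).trans_eq (inv_mul_cancel₀ hI)
  have hfactor : J = I * J₀ := by rw [hJ₀, ← mul_assoc, mul_inv_cancel₀ hI, one_mul]
  have hJ₀ne : J₀ ≠ ⊥ := by
    rintro rfl
    exact hJ (by simpa using hfactor)
  calc absNorm I = absNorm I * 1 := (mul_one _).symm
    _ ≤ absNorm I * absNorm (J₀ : FractionalIdeal R⁰ K) := by
      gcongr
      · exact absNorm_nonneg I
      · rw [coeIdeal_absNorm]
        exact_mod_cast Nat.one_le_iff_ne_zero.mpr (Ideal.absNorm_eq_zero_iff.not.mpr hJ₀ne)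
    _ = absNorm J := by rw [hfactor, map_mul]

theorem absNorm_le_abs_norm_of_mem [IsLocalization (Algebra.algebraMapSubmonoid R ℤ⁰) K]
    [Algebra ℚ K] [Module.Finite ℚ K] {I : FractionalIdeal R⁰ K} {x : K} (hx : x ∈ I)
    (hx0 : x ≠ 0) : absNorm I ≤ |Algebra.norm ℚ x| := by
  rw [← absNorm_span_singleton R]
  exact absNorm_le_absNorm_of_le (spanSingleton_ne_zero_iff.mpr hx0)
    (spanSingleton_le_iff_mem.mpr hx)

end FractionalIdeal

theorem arakelovQ_eq_sum_mult_mul (x : InfinitePlace k → ℝ) (f : k) :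
    arakelovQ k x f = ∑ v, (v.mult : ℝ) * (v f * Real.exp (-x v / v.mult)) ^ 2 := by
  refine sum_congr rfl fun v _ => ?_
  rw [mul_pow, ← Real.exp_nat_mul]
  by_cases hv : v.IsReal <;> simp only [hv, if_true, if_false, InfinitePlace.mult] <;> push_cast <;>
    ring_nf

theorem one_le_prod_pow_mult_mul_exp_neg {I : FractionalIdeal (nonZeroDivisors (𝓞 k)) k}
    {x : InfinitePlace k → ℝ}
    (hx : ∏ v : InfinitePlace k, Real.exp (x v) = (FractionalIdeal.absNorm I : ℝ))
    {f : k} (hf : f ∈ I) (hf0 : f ≠ 0) :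
    1 ≤ ∏ v : InfinitePlace k, v f ^ v.mult * Real.exp (-x v) := by
  have hNI : (0 : ℝ) < FractionalIdeal.absNorm I := hx ▸ prod_pos fun v _ => Real.exp_pos _
  rw [prod_mul_distrib, InfinitePlace.prod_eq_abs_norm]
  simp only [Real.exp_neg, prod_inv_distrib, hx, ← div_eq_mul_inv]
  rw [one_le_div hNI]
  exact_mod_cast FractionalIdeal.absNorm_le_abs_norm_of_mem hf hf0

theorem arakelovQ_ge_degree (I : FractionalIdeal (nonZeroDivisors (𝓞 k)) k)
    (x : InfinitePlace k → ℝ)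
    (hx : ∏ v : InfinitePlace k, Real.exp (x v) = (FractionalIdeal.absNorm I : ℝ)) :
    (∀ f ∈ I, f ≠ 0 → (Module.finrank ℚ k : ℝ) ≤ arakelovQ k x f) ∧
    arakelovQ k (fun _ => 0) (1 : k) = (Module.finrank ℚ k : ℝ) := by
  have hn : ∑ v : InfinitePlace k, (v.mult : ℝ) = Module.finrank ℚ k := by
    exact_mod_cast InfinitePlace.sum_mult_eq
  refine ⟨fun f hf hf0 => ?_, by simp [arakelovQ_eq_sum_mult_mul, hn]⟩
  rw [arakelovQ_eq_sum_mult_mul, ← hn]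
  refine Real.sum_le_sum_mul_of_one_le_prod_rpow _ (fun v _ => Nat.cast_nonneg _)
    (hn ▸ Nat.cast_pos.mpr Module.finrank_pos) (fun v _ => sq_nonneg _) ?_
  calc 1 ≤ (∏ v : InfinitePlace k, v f ^ v.mult * Real.exp (-x v)) ^ 2 :=
        one_le_pow₀ (one_le_prod_pow_mult_mul_exp_neg k hx hf hf0)
    _ = ∏ v : InfinitePlace k, ((v f * Real.exp (-x v / v.mult)) ^ 2) ^ (v.mult : ℝ) := by
      rw [← prod_pow]
      refine prod_congr rfl fun v _ => ?_
      have hexp : Real.exp (-x v / v.mult) ^ v.mult = Real.exp (-x v) := by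
        rw [← Real.exp_nat_mul, mul_div_cancel₀ _ InfinitePlace.mult_coe_ne_zero]
      rw [Real.rpow_natCast, ← pow_mul, mul_comm 2 v.mult, pow_mul, mul_pow (v f), hexp]
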